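/- For a simple random walk on a finite tree, all hitting times H(x,y) are integers. -/

import Mathlib

/-- `IsHittingTime G a H` : `H` satisfies the linear system characterizing the expected
hitting times of the absorbing vertex `a` for the simple random walk on `G`. -/
def IsHittingTime {V : Type*} [Fintype V] (G : SimpleGraph V) [DecidableRel G.Adj]
    (a : V) (H : V → ℝ) : Prop :=
  H a = 0 ∧ ∀ x, x ≠ a →
    (G.degree x : ℝ) * H x = (G.degree x : ℝ) + ∑ y ∈ G.neighborFinset x, H y

/-!
Let `x ≠ y` and let `p` be the next vertex on the path from `x` to `y`. Deleting the edge
`x p` from the tree leaves a component `S ∋ x` avoiding `p` and `y`. Summing the equations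
`∑_{w ~ z} (H z - H w) = deg z` over `z ∈ S`, the contributions of edges inside `S` cancel and
the only edge leaving `S` is `x p`, so `H x - H p = ∑_{z ∈ S} deg z` is a natural number.
Integrality follows by induction along the path, starting from `H y = 0`.
-/

open Finset

namespace SimpleGraph

section Boundary

variable {V M : Type*} [DecidableEq V] [AddCommGroup M] (G : SimpleGraph V) [G.LocallyFinite]

theorem sum_sum_neighborFinset_sub_eq_sum_boundary (f : V → M) (S : Finset V) :
    ∑ z ∈ S, ∑ w ∈ G.neighborFinset z, (f z - f w) =
      ∑ z ∈ S, ∑ w ∈ G.neighborFinset z with w ∉ S, (f z - f w) := by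
  classical
  have interior : ∑ z ∈ S, ∑ w ∈ G.neighborFinset z with w ∈ S, (f z - f w) = 0 := by
    have hfilter : ∀ z, {w ∈ G.neighborFinset z | w ∈ S} = {w ∈ S | G.Adj z w} := by
      intro z; ext w; simp [and_comm]
    simp only [hfilter, sum_sub_distrib, sum_filter]
    rw [sub_eq_zero, sum_comm]
    simp only [adj_comm]
  rw [← add_zero (∑ z ∈ S, ∑ w ∈ _ with w ∉ S, _), ← interior, ← sum_add_distrib]
  exact sum_congr rfl fun z _ => (sum_filter_not_add_sum_filter _ _ _).symm

theorem sum_boundary_eq_of_unique_exit {S : Finset V} {x p : V} (hxp : G.Adj x p)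
    (hx : x ∈ S) (hp : p ∉ S) (hexit : ∀ z ∈ S, ∀ w, G.Adj z w → w ∉ S → z = x ∧ w = p)
    (f : V → M) :
    ∑ z ∈ S, ∑ w ∈ G.neighborFinset z with w ∉ S, (f z - f w) = f x - f p := by
  have hboundary : ∀ z ∈ S, {w ∈ G.neighborFinset z | w ∉ S} = if z = x then {p} else ∅ := by
    intro z hz
    ext w
    grind [mem_neighborFinset]
  rw [sum_congr rfl fun z hz => by rw [hboundary z hz], sum_eq_single_of_mem x hx]
  · simp
  · intro z _ hzx
    simp [hzx]

end Boundary

theorem IsAcyclic.exists_unique_exit {V : Type*} [Fintype V] {G : SimpleGraph V}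
    (hG : G.IsAcyclic) {x p y : V} (hxp : G.Adj x p) (w : G.Walk p y) (hx : x ∉ w.support) :
    ∃ S : Finset V, x ∈ S ∧ p ∉ S ∧ y ∉ S ∧
      ∀ z ∈ S, ∀ w, G.Adj z w → w ∉ S → z = x ∧ w = p := by
  classical
  set G' := G.deleteEdges {s(x, p)}
  have hbridge : ¬ G'.Reachable x p := isAcyclic_iff_forall_adj_isBridge.mp hG hxp
  have hpy : G'.Reachable p y :=
    (w.toDeleteEdge s(x, p) fun he => hx (w.fst_mem_support_of_mem_edges he)).reachable
  refine ⟨({z | G'.Reachable x z} : Finset V), by simp, by simpa, fun hy => hbridge ?_, ?_⟩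
  · exact (mem_filter.mp hy).2.trans hpy.symm
  intro z hz v hzv hv
  simp only [mem_filter, mem_univ, true_and] at hz hv
  have hedge : s(z, v) = s(x, p) := by
    by_contra hne
    exact hv (hz.trans (deleteEdges_adj.mpr ⟨hzv, hne⟩).reachable)
  rcases Sym2.eq_iff.mp hedge with h | ⟨rfl, rfl⟩
  · exact h
  · exact absurd hz hbridge

end SimpleGraph

open SimpleGraph

theorem IsHittingTime.exists_nat_eq_add_of_adj {V : Type*} [Fintype V] {G : SimpleGraph V}
    [DecidableRel G.Adj] (hG : G.IsAcyclic) {y : V} {H : V → ℝ} (hH : IsHittingTime G y H)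
    {x p : V} (hxp : G.Adj x p) (w : G.Walk p y) (hx : x ∉ w.support) :
    ∃ n : ℕ, H x = H p + n := by
  classical
  obtain ⟨S, hxS, hpS, hyS, hexit⟩ := hG.exists_unique_exit hxp w hx
  refine ⟨∑ z ∈ S, G.degree z, ?_⟩
  have hlaplacian : ∀ z ∈ S, ∑ v ∈ G.neighborFinset z, (H z - H v) = G.degree z := by
    intro z hz
    rw [sum_sub_distrib, sum_const, card_neighborFinset_eq_degree, nsmul_eq_mul,
      hH.2 z (by rintro rfl; exact hyS hz), add_sub_cancel_right]
  have hflux := G.sum_sum_neighborFinset_sub_eq_sum_boundary H S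
  rw [G.sum_boundary_eq_of_unique_exit hxp hxS hpS hexit, sum_congr rfl hlaplacian] at hflux
  push_cast
  linarith

theorem tree_hitting_times_integer {V : Type*} [Fintype V]
    (T : SimpleGraph V) [DecidableRel T.Adj] (htree : T.IsTree)
    (y : V) (H : V → ℝ) (hH : IsHittingTime T y H) (x : V) :
    ∃ n : ℤ, H x = n := by
  obtain ⟨w, hw⟩ := (htree.connected.preconnected x y).exists_isPath
  induction w with
  | nil => exact ⟨0, by simpa using hH.1⟩
  | cons hxp w ih =>
    obtain ⟨hw, hx⟩ := Walk.cons_isPath_iff _ _ |>.mp hw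
    obtain ⟨m, hm⟩ := ih hH hw
    obtain ⟨n, hn⟩ := hH.exists_nat_eq_add_of_adj htree.isAcyclic hxp w hx
    exact ⟨m + n, by rw [hn, hm]; push_cast; ring⟩
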